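/- arXiv:1410.8807 — 2 statements merged into one kernel-verified Lean document; each statement's English description precedes it below -/
import Mathlib

section
/- The triangle graph T(G) of a graph G contains a triangle (an induced C_3) if and only if G contains a subgraph isomorphic to K_4 or to K_5 minus the edges of a triangle. Equivalently, T(G) is triangle-free iff G has no subgraph isomorphic to K_4 or K_5 - K_3. -/
open SimpleGraph

/-- A triangle in a graph: a 3-element vertex set, pairwise adjacent. -/
def IsTriangle {V : Type*} (G : SimpleGraph V) (t : Finset V) : Prop :=
  t.card = 3 ∧ ∀ u ∈ t, ∀ v ∈ t, u ≠ v → G.Adj u v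

/-- The triangle graph: vertices are the triangles of `G`, two triangles are
adjacent iff they share an edge (equivalently, share exactly two vertices). -/
def triangleGraph {V : Type*} [DecidableEq V] (G : SimpleGraph V) :
    SimpleGraph {t : Finset V // IsTriangle G t} where
  Adj s t := s ≠ t ∧ ((s : Finset V) ∩ (t : Finset V)).card = 2
  symm := by
    constructor
    intro s t h
    exact ⟨h.1.symm, by rw [Finset.inter_comm]; exact h.2⟩
  loopless := ⟨fun s h => h.1 rfl⟩

/-- `K₅` minus the edges of a triangle (on vertices 0,1,2). -/
def K5mK3 : SimpleGraph (Fin 5) where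
  Adj u v := u ≠ v ∧ ¬(u.val < 3 ∧ v.val < 3)
  symm := by
    constructor
    intro u v h
    exact ⟨h.1.symm, fun hc => h.2 ⟨hc.2, hc.1⟩⟩
  loopless := ⟨fun u h => h.1 rfl⟩

/-- The wheel `Wₙ = K₁ ∨ Cₙ`; the hub is `none`. -/
def wheel (n : ℕ) : SimpleGraph (Option (Fin n)) :=
  SimpleGraph.fromRel (fun u v =>
    u = none ∨ ∃ a b, u = some a ∧ v = some b ∧ (cycleGraph n).Adj a b)

/-- The square of a graph: join vertices at distance at most 2. -/
def squareGraph {V : Type*} (G : SimpleGraph V) : SimpleGraph V where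
  Adj u v := u ≠ v ∧ (G.Adj u v ∨ ∃ w, G.Adj u w ∧ G.Adj w v)
  symm := by
    constructor
    intro u v h
    refine ⟨h.1.symm, ?_⟩
    rcases h.2 with h' | ⟨w, h1, h2⟩
    · exact Or.inl h'.symm
    · exact Or.inr ⟨w, h2.symm, h1.symm⟩
  loopless := ⟨fun u h => h.1 rfl⟩

/-- The number of triangles of `G` containing both `u` and `v`. -/
noncomputable def triCount {V : Type*} (G : SimpleGraph V) (u v : V) : ℕ :=
  {t : Finset V | IsTriangle G t ∧ u ∈ t ∧ v ∈ t}.ncard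

/-- `G` contains a (not necessarily induced) subgraph isomorphic to `H`. -/
def HasSubgraphIso {α V : Type*} (H : SimpleGraph α) (G : SimpleGraph V) : Prop :=
  ∃ f : H →g G, Function.Injective f

/-!
Let `S, T, U` be pairwise adjacent triangles of `G` and write `S = e ∪ {c}`, `T = e ∪ {d}`
with `e = S ∩ T` an edge. If `e ⊆ U`, then `U = e ∪ {f}` and `c, d, f` together with `e` span
a copy of `K₅ - K₃`. Otherwise `U` shares an edge with `S` and with `T` without containing `e`,
which forces `c, d ∈ U`; hence `c ~ d` and `S ∪ {d}` is a `K₄`. Conversely, an injective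
homomorphism `H → G` induces one `T(H) → T(G)`, and both `T(K₄)` and `T(K₅ - K₃)` contain a
triangle.
-/

open Finset

lemma hasSubgraphIso_iff_isContained {α V : Type*} {H : SimpleGraph α} {G : SimpleGraph V} :
    HasSubgraphIso H G ↔ H ⊑ G :=
  ⟨fun ⟨f, hf⟩ => ⟨f.toCopy hf⟩, fun ⟨f⟩ => ⟨f.toHom, f.injective⟩⟩

lemma nonempty_cycleGraph_three_embedding_iff {V : Type*} (G : SimpleGraph V) :
    Nonempty (cycleGraph 3 ↪g G) ↔ completeGraph (Fin 3) ⊑ G := by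
  rw [cycleGraph_three_eq_top]
  exact top_isIndContained_iff_top_isContained

lemma SimpleGraph.IsNClique.completeGraph_isContained {V : Type*} {G : SimpleGraph V} {n : ℕ}
    {s : Finset V} (h : G.IsNClique n s) : completeGraph (Fin n) ⊑ G :=
  (not_cliqueFree_iff_top_isContained n).1 h.not_cliqueFree

lemma completeGraph_fin_three_isContained {V : Type*} {G : SimpleGraph V} {x y z : V}
    (hxy : G.Adj x y) (hxz : G.Adj x z) (hyz : G.Adj y z) : completeGraph (Fin 3) ⊑ G := by
  classical
  exact (is3Clique_triple_iff.2 ⟨hxy, hxz, hyz⟩).completeGraph_isContained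

lemma Finset.mem_of_card_le_card_insert_inter {α : Type*} [DecidableEq α] {c : α}
    {s u : Finset α} (h : #s ≤ #(insert c s ∩ u)) (hs : ¬s ⊆ u) : c ∈ u := by
  by_contra hc
  rw [insert_inter_of_notMem hc] at h
  exact hs (inter_eq_left.1 (eq_of_subset_of_card_le inter_subset_left h))

section
variable {V W : Type*} {G : SimpleGraph V} {H : SimpleGraph W}

lemma isTriangle_iff_isNClique {t : Finset V} : IsTriangle G t ↔ G.IsNClique 3 t :=
  ⟨fun h => ⟨h.2, h.1⟩, fun h => ⟨h.2, h.1⟩⟩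

lemma IsTriangle.adj {t : Finset V} (ht : IsTriangle G t) {x y : V} (hx : x ∈ t) (hy : y ∈ t)
    (hxy : x ≠ y) : G.Adj x y :=
  ht.2 x hx y hy hxy

lemma IsTriangle.map {t : Finset W} (ht : IsTriangle H t) (f : Copy H G) :
    IsTriangle G (t.map f.toEmbedding) := by
  refine ⟨by rw [card_map, ht.1], ?_⟩
  simp only [mem_map]
  rintro _ ⟨x, hx, rfl⟩ _ ⟨y, hy, rfl⟩ hxy
  exact f.toHom.map_adj (ht.adj hx hy (ne_of_apply_ne _ hxy))

lemma K5mK3_isContained {a b c d f : V} (hcd : c ≠ d) (hcf : c ≠ f) (hdf : d ≠ f)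
    (hab : G.Adj a b) (hca : G.Adj c a) (hcb : G.Adj c b) (hda : G.Adj d a) (hdb : G.Adj d b)
    (hfa : G.Adj f a) (hfb : G.Adj f b) : K5mK3 ⊑ G := by
  have hinj : Function.Injective ![c, d, f, a, b] := by
    have := hab.ne; have := hca.ne; have := hcb.ne; have := hda.ne; have := hdb.ne
    have := hfa.ne; have := hfb.ne
    intro i j h
    fin_cases i <;> fin_cases j <;> simp_all [eq_comm]
  refine ⟨⟨⟨![c, d, f, a, b], fun {i j} h => ?_⟩, hinj⟩⟩
  fin_cases i <;> fin_cases j <;> simp_all [K5mK3, G.adj_comm]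

variable [DecidableEq V] [DecidableEq W]

lemma IsTriangle.exists_insert_eq {t e : Finset V} (ht : IsTriangle G t) (he : e ⊆ t)
    (he2 : #e = 2) : ∃ c ∉ e, insert c e = t :=
  exists_eq_insert_iff.2 ⟨he, by rw [he2, ht.1]⟩

def SimpleGraph.Copy.triangleGraph (f : Copy H G) :
    Copy (_root_.triangleGraph H) (_root_.triangleGraph G) :=
  have hinj : Function.Injective fun t : {t // IsTriangle H t} =>
      (⟨t.1.map f.toEmbedding, t.2.map f⟩ : {t // IsTriangle G t}) := fun s t h =>
    Subtype.ext (Finset.map_injective _ (congrArg Subtype.val h))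
  ⟨⟨_, fun {s t} ⟨hst, hcard⟩ =>
    ⟨hinj.ne hst, by simp only [← Finset.map_inter, card_map, hcard]⟩⟩, hinj⟩

lemma SimpleGraph.IsContained.triangleGraph (h : H ⊑ G) :
    _root_.triangleGraph H ⊑ _root_.triangleGraph G :=
  let ⟨f⟩ := h; ⟨f.triangleGraph⟩

lemma K4_isContained_or_K5mK3_isContained_of_adj {S T U : {t // IsTriangle G t}}
    (hST : (triangleGraph G).Adj S T) (hSU : (triangleGraph G).Adj S U)
    (hTU : (triangleGraph G).Adj T U) : completeGraph (Fin 4) ⊑ G ∨ K5mK3 ⊑ G := by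
  obtain ⟨a, b, hab, he⟩ := card_eq_two.1 hST.2
  have he2 : #({a, b} : Finset V) = 2 := he ▸ hST.2
  obtain ⟨c, hce, hS⟩ := S.2.exists_insert_eq (he ▸ inter_subset_left) he2
  obtain ⟨d, hde, hT⟩ := T.2.exists_insert_eq (he ▸ inter_subset_right) he2
  simp only [mem_insert, mem_singleton, not_or] at hce hde
  have hcd : c ≠ d := by
    rintro rfl
    exact hST.1 (Subtype.ext (hS.symm.trans hT))
  have hGab : G.Adj a b := S.2.adj (by simp [← hS]) (by simp [← hS]) hab
  by_cases habU : {a, b} ⊆ U.1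
  · obtain ⟨f, hfe, hU⟩ := U.2.exists_insert_eq habU he2
    simp only [mem_insert, mem_singleton, not_or] at hfe
    have hcf : c ≠ f := by
      rintro rfl
      exact hSU.1 (Subtype.ext (hS.symm.trans hU))
    have hdf : d ≠ f := by
      rintro rfl
      exact hTU.1 (Subtype.ext (hT.symm.trans hU))
    refine .inr (K5mK3_isContained hcd hcf hdf hGab
      (S.2.adj ?_ ?_ hce.1) (S.2.adj ?_ ?_ hce.2) (T.2.adj ?_ ?_ hde.1) (T.2.adj ?_ ?_ hde.2)
      (U.2.adj ?_ ?_ hfe.1) (U.2.adj ?_ ?_ hfe.2)) <;> simp [← hS, ← hT, ← hU]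
  · have hcU : c ∈ U.1 := mem_of_card_le_card_insert_inter (by rw [hS, he2, hSU.2]) habU
    have hdU : d ∈ U.1 := mem_of_card_le_card_insert_inter (by rw [hT, he2, hTU.2]) habU
    have hK4 : G.IsNClique 4 (insert d S.1) := by
      refine (isTriangle_iff_isNClique.1 S.2).insert fun x hx => ?_
      rw [← hS, mem_insert, mem_insert, mem_singleton] at hx
      rcases hx with rfl | rfl | rfl
      · exact U.2.adj hdU hcU hcd.symm
      · exact T.2.adj (by simp [← hT]) (by simp [← hT]) hde.1
      · exact T.2.adj (by simp [← hT]) (by simp [← hT]) hde.2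
    exact .inl hK4.completeGraph_isContained

end

lemma completeGraph_fin_three_isContained_triangleGraph_K4 :
    completeGraph (Fin 3) ⊑ triangleGraph (completeGraph (Fin 4)) :=
  completeGraph_fin_three_isContained
    (x := ⟨{0, 1, 2}, by unfold IsTriangle; decide⟩)
    (y := ⟨{0, 1, 3}, by unfold IsTriangle; decide⟩)
    (z := ⟨{0, 2, 3}, by unfold IsTriangle; decide⟩)
    ⟨by decide, by decide⟩ ⟨by decide, by decide⟩ ⟨by decide, by decide⟩

lemma completeGraph_fin_three_isContained_triangleGraph_K5mK3 :
    completeGraph (Fin 3) ⊑ triangleGraph K5mK3 :=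
  completeGraph_fin_three_isContained
    (x := ⟨{0, 3, 4}, by unfold IsTriangle K5mK3; decide⟩)
    (y := ⟨{1, 3, 4}, by unfold IsTriangle K5mK3; decide⟩)
    (z := ⟨{2, 3, 4}, by unfold IsTriangle K5mK3; decide⟩)
    ⟨by decide, by decide⟩ ⟨by decide, by decide⟩ ⟨by decide, by decide⟩

theorem triangleGraph_C3_iff_general {V : Type*} [DecidableEq V]
    (G : SimpleGraph V) :
    Nonempty (cycleGraph 3 ↪g triangleGraph G) ↔
      HasSubgraphIso (completeGraph (Fin 4)) G ∨ HasSubgraphIso K5mK3 G := by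
  rw [nonempty_cycleGraph_three_embedding_iff, hasSubgraphIso_iff_isContained,
    hasSubgraphIso_iff_isContained]
  constructor
  · rintro ⟨f⟩
    have hadj (i j : Fin 3) (h : i ≠ j) : (triangleGraph G).Adj (f i) (f j) := f.toHom.map_adj h
    exact K4_isContained_or_K5mK3_isContained_of_adj (hadj 0 1 (by decide))
      (hadj 0 2 (by decide)) (hadj 1 2 (by decide))
  · rintro (h | h)
    · exact completeGraph_fin_three_isContained_triangleGraph_K4.trans h.triangleGraph
    · exact completeGraph_fin_three_isContained_triangleGraph_K5mK3.trans h.triangleGraph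

/-- `T(G)` contains a triangle iff `G` contains a subgraph isomorphic to `K₄`
or to `K₅` minus the edges of a triangle. -/
theorem triangleGraph_C3_iff {V : Type*} [Fintype V] [DecidableEq V]
    (G : SimpleGraph V) :
    Nonempty (cycleGraph 3 ↪g triangleGraph G) ↔
      HasSubgraphIso (completeGraph (Fin 4)) G ∨ HasSubgraphIso K5mK3 G :=
  triangleGraph_C3_iff_general G
end

section
/- The triangle graph T(G) of a graph G contains an induced 5-cycle if and only if G contains a subgraph isomorphic to the wheel W_5 = K_1 ∨ C_5 or to K_5. -/
open SimpleGraph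

/-! Let `T₀, …, T₄` be the triangles of an induced 5-cycle of `T(G)` and `Eᵢ = Tᵢ ∩ Tᵢ₊₁` the
shared edges. The distinct edges `Eᵢ` and `Eᵢ₊₁` of `Tᵢ₊₁` meet in a single vertex `cᵢ`, the pivot.
If two consecutive pivots coincide, this vertex and `cᵢ₊₃` both lie in the non-adjacent triangles
`Tᵢ` and `Tᵢ₊₃`, which forces all pivots to agree: the common vertex is the hub of a `W₅` whose rim
consists of the other endpoints of the `Eᵢ`. Otherwise the pivots are pairwise distinct and
`Tᵢ₊₂ = {cᵢ, cᵢ₊₁, cᵢ₊₂}`, so they span a `K₅`. Conversely, the triangles `{hub, i, i + 1}` of `W₅`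
and `{i, i + 1, i + 2}` of `K₅` form induced 5-cycles, and an injective homomorphism embeds triangle
graphs. -/

open Finset Function

lemma fin5_rel_of_ne {P : Fin 5 → Fin 5 → Prop} (symm : ∀ i j, P i j → P j i)
    (succ : ∀ i, P i (i + 1)) (add_two : ∀ i, P i (i + 2)) (i j : Fin 5) (hij : i ≠ j) :
    P i j := by
  have : j = i + 1 ∨ i = j + 1 ∨ j = i + 2 ∨ i = j + 2 := by revert i j; decide
  rcases this with rfl | rfl | rfl | rfl
  exacts [succ i, symm _ _ (succ j), add_two i, symm _ _ (add_two j)]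

lemma Finset.eq_of_card_le_card_inter {V : Type*} [DecidableEq V] {s t : Finset V}
    (hs : #s ≤ #(s ∩ t)) (ht : #t ≤ #(s ∩ t)) : s = t :=
  (eq_of_subset_of_card_le inter_subset_left hs).symm.trans
    (eq_of_subset_of_card_le inter_subset_right ht)

lemma Finset.card_inter_le_one_of_card_eq_three {V : Type*} [DecidableEq V] {s t : Finset V}
    (hs : #s = 3) (ht : #t = 3) (hst : s ≠ t) (h2 : #(s ∩ t) ≠ 2) : #(s ∩ t) ≤ 1 := by
  have h3 : #(s ∩ t) ≠ 3 := fun h => hst (eq_of_card_le_card_inter (by omega) (by omega))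
  have := hs ▸ card_le_card (inter_subset_left (s₁ := s) (s₂ := t))
  omega

lemma Finset.card_inter_eq_one_of_subset_of_card_eq_three {V : Type*} [DecidableEq V]
    {s t u : Finset V} (hu : #u = 3) (hsu : s ⊆ u) (htu : t ⊆ u) (hs : #s = 2) (ht : #t = 2)
    (hst : s ≠ t) : #(s ∩ t) = 1 := by
  have hunion : #(s ∪ t) ≤ 3 := hu ▸ card_le_card (union_subset hsu htu)
  have hne : #(s ∩ t) ≠ 2 := fun h => hst (eq_of_card_le_card_inter (by omega) (by omega))
  have := card_inter_add_card_union s t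
  have := hs ▸ card_le_card (inter_subset_left (s₁ := s) (s₂ := t))
  omega

lemma triangleGraph_adj {V : Type*} [DecidableEq V] {G : SimpleGraph V}
    {s t : {t : Finset V // IsTriangle G t}} :
    (triangleGraph G).Adj s t ↔ s.1 ≠ t.1 ∧ #(s.1 ∩ t.1) = 2 :=
  Subtype.ext_iff.not.and Iff.rfl

lemma card_inter_le_one_of_not_triangleGraph_adj {V : Type*} [DecidableEq V] {G : SimpleGraph V}
    {s t : {t : Finset V // IsTriangle G t}} (hst : s ≠ t) (h : ¬(triangleGraph G).Adj s t) :
    #(s.1 ∩ t.1) ≤ 1 :=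
  card_inter_le_one_of_card_eq_three s.2.1 t.2.1 (Subtype.ext_iff.not.mp hst)
    fun h2 => h (triangleGraph_adj.mpr ⟨Subtype.ext_iff.not.mp hst, h2⟩)

lemma IsTriangle.image {α V : Type*} [DecidableEq V] {H : SimpleGraph α} {G : SimpleGraph V}
    {t : Finset α} (ht : IsTriangle H t) (f : H →g G) (hf : Injective f) :
    IsTriangle G (t.image f) := by
  refine ⟨(card_image_of_injective t hf).trans ht.1, ?_⟩
  simp only [mem_image]
  rintro _ ⟨u, hu, rfl⟩ _ ⟨v, hv, rfl⟩ huv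
  exact f.map_adj (ht.2 u hu v hv (ne_of_apply_ne f huv))

lemma IsTriangle.isClique {V : Type*} {G : SimpleGraph V} {t : Finset V} (ht : IsTriangle G t) :
    G.IsClique (t : Set V) :=
  fun _ hu _ hv => ht.2 _ hu _ hv

def SimpleGraph.Hom.triangleGraphEmbedding {α V : Type*} [DecidableEq α] [DecidableEq V]
    {H : SimpleGraph α} {G : SimpleGraph V} (f : H →g G) (hf : Injective f) :
    triangleGraph H ↪g triangleGraph G where
  toFun t := ⟨t.1.image f, t.2.image f hf⟩
  inj' _ _ hst := Subtype.ext (image_injective hf (congrArg Subtype.val hst))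
  map_rel_iff' := by
    intro s t
    rw [triangleGraph_adj, triangleGraph_adj]
    change s.1.image f ≠ t.1.image f ∧ #(s.1.image f ∩ t.1.image f) = 2 ↔ _
    rw [← image_inter _ _ hf, card_image_of_injective _ hf, (image_injective hf).ne_iff]

instance (n : ℕ) : DecidableRel (wheel n).Adj := fun a b =>
  decidable_of_iff' _ (SimpleGraph.fromRel_adj _ a b)

def wheelTriangleCycle : cycleGraph 5 ↪g triangleGraph (wheel 5) where
  toFun i := ⟨{none, some i, some (i + 1)}, by revert i; unfold IsTriangle; decide⟩
  inj' := by unfold Injective; decide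
  map_rel_iff' := by
    intro i j
    rw [triangleGraph_adj]
    revert i j
    decide

def completeGraphTriangleCycle : cycleGraph 5 ↪g triangleGraph (completeGraph (Fin 5)) where
  toFun i := ⟨{i, i + 1, i + 2}, by revert i; unfold IsTriangle; decide⟩
  inj' := by unfold Injective; decide
  map_rel_iff' := by
    intro i j
    rw [triangleGraph_adj]
    revert i j
    decide

lemma hasSubgraphIso_wheel_of_hub_rim {V : Type*} {G : SimpleGraph V} {n : ℕ} (h : V)
    (a : Fin (n + 2) → V) (ha : Injective a) (hah : ∀ j, a j ≠ h) (hspoke : ∀ j, G.Adj h (a j))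
    (hrim : ∀ j, G.Adj (a j) (a (j + 1))) : HasSubgraphIso (wheel (n + 2)) G := by
  refine ⟨⟨fun o => o.elim h a, ?_⟩, ?_⟩
  · rintro (_ | x) (_ | y) huv
    · exact absurd rfl huv.ne
    · exact hspoke y
    · exact (hspoke x).symm
    · obtain ⟨-, hxy⟩ : x ≠ y ∧ ((cycleGraph (n + 2)).Adj x y ∨ (cycleGraph (n + 2)).Adj y x) := by
        simpa [wheel] using huv
      rcases cycleGraph_adj.mp (hxy.elim id .symm) with hx | hy
      · simpa [sub_eq_iff_eq_add'.mp hx] using (hrim y).symm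
      · simpa [sub_eq_iff_eq_add'.mp hy] using hrim x
  · rintro (_ | x) (_ | y) hxy
    · rfl
    · exact absurd hxy.symm (hah y)
    · exact absurd hxy (hah x)
    · exact congrArg some (ha hxy)

/-- The pattern of vertex sets of the triangles of an induced 5-cycle in a triangle graph. -/
structure TripleCycle (V : Type*) [DecidableEq V] where
  T : Fin 5 → Finset V
  card_T : ∀ i, #(T i) = 3
  card_inter_succ : ∀ i, #(T i ∩ T (i + 1)) = 2
  card_inter_add_two : ∀ i, #(T i ∩ T (i + 2)) ≤ 1

namespace TripleCycle

variable {V : Type*} [DecidableEq V] {G : SimpleGraph V} (C : TripleCycle V)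

def edge (i : Fin 5) : Finset V := C.T i ∩ C.T (i + 1)

lemma edge_subset_left (i : Fin 5) : C.edge i ⊆ C.T i := inter_subset_left

lemma edge_subset_right (i : Fin 5) : C.edge i ⊆ C.T (i + 1) := inter_subset_right

lemma card_edge (i : Fin 5) : #(C.edge i) = 2 := C.card_inter_succ i

lemma edge_ne_edge_succ (i : Fin 5) : C.edge i ≠ C.edge (i + 1) := by
  intro h
  have hsub : C.edge i ⊆ C.T i ∩ C.T (i + 2) := by
    refine subset_inter (C.edge_subset_left i) ?_
    simpa [show i + 1 + 1 = i + 2 by grind, ← h] using C.edge_subset_right (i + 1)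
  have := card_le_card hsub
  have := C.card_edge i
  have := C.card_inter_add_two i
  omega

lemma exists_edge_inter_edge_succ_eq_singleton (i : Fin 5) :
    ∃ c, C.edge i ∩ C.edge (i + 1) = {c} :=
  card_eq_one.mp <| card_inter_eq_one_of_subset_of_card_eq_three (C.card_T (i + 1))
    (C.edge_subset_right i) (C.edge_subset_left (i + 1)) (C.card_edge i) (C.card_edge (i + 1))
    (C.edge_ne_edge_succ i)

noncomputable def pivot (i : Fin 5) : V := (C.exists_edge_inter_edge_succ_eq_singleton i).choose

lemma edge_inter_edge_succ (i : Fin 5) : C.edge i ∩ C.edge (i + 1) = {C.pivot i} :=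
  (C.exists_edge_inter_edge_succ_eq_singleton i).choose_spec

lemma pivot_mem_edge (i : Fin 5) : C.pivot i ∈ C.edge i :=
  (mem_inter.mp (C.edge_inter_edge_succ i ▸ mem_singleton_self _)).1

lemma pivot_mem_edge_succ (i : Fin 5) : C.pivot i ∈ C.edge (i + 1) :=
  (mem_inter.mp (C.edge_inter_edge_succ i ▸ mem_singleton_self _)).2

lemma eq_pivot_of_mem {i : Fin 5} {x : V} (h : x ∈ C.edge i) (h' : x ∈ C.edge (i + 1)) :
    x = C.pivot i :=
  mem_singleton.mp (C.edge_inter_edge_succ i ▸ mem_inter.mpr ⟨h, h'⟩)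

lemma pivot_mem_T (i : Fin 5) : C.pivot i ∈ C.T i :=
  C.edge_subset_left i (C.pivot_mem_edge i)

lemma pivot_mem_T_succ (i : Fin 5) : C.pivot i ∈ C.T (i + 1) :=
  C.edge_subset_right i (C.pivot_mem_edge i)

lemma pivot_mem_T_add_two (i : Fin 5) : C.pivot i ∈ C.T (i + 2) := by
  simpa [show i + 1 + 1 = i + 2 by grind] using C.edge_subset_right _ (C.pivot_mem_edge_succ i)

lemma eq_of_mem_T_of_mem_T_add_two {i : Fin 5} {x y : V} (hx : x ∈ C.T i) (hx' : x ∈ C.T (i + 2))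
    (hy : y ∈ C.T i) (hy' : y ∈ C.T (i + 2)) : x = y :=
  card_le_one.mp (C.card_inter_add_two i) x (mem_inter.mpr ⟨hx, hx'⟩) y (mem_inter.mpr ⟨hy, hy'⟩)

lemma pivot_eq_of_pivot_eq_pivot_succ {i : Fin 5} (h : C.pivot i = C.pivot (i + 1)) (j : Fin 5) :
    C.pivot j = C.pivot i := by
  have h0 : C.pivot i ∈ C.edge i := C.pivot_mem_edge i
  have h1 : C.pivot i ∈ C.edge (i + 1) := C.pivot_mem_edge_succ i
  have h2 : C.pivot i ∈ C.edge (i + 2) := by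
    simpa [h, show i + 1 + 1 = i + 2 by grind] using C.pivot_mem_edge_succ (i + 1)
  -- both `pivot i` and `pivot (i + 3)` lie in the non-adjacent triangles `T (i + 3)`, `T i`
  have h3 : C.pivot (i + 3) = C.pivot i := by
    have hi3 : C.pivot i ∈ C.T (i + 3) := by
      simpa [show i + 2 + 1 = i + 3 by grind] using C.edge_subset_right _ h2
    have hi5 : C.pivot i ∈ C.T (i + 3 + 2) := by
      simpa [show i + 3 + 2 = i by grind] using C.edge_subset_left i h0
    exact C.eq_of_mem_T_of_mem_T_add_two (C.edge_subset_left _ (C.pivot_mem_edge _))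
      (C.pivot_mem_T_add_two _) hi3 hi5
  have h4 : ∀ j, C.pivot i ∈ C.edge j := by
    intro j
    have hj : ∀ i j : Fin 5, j = i ∨ j = i + 1 ∨ j = i + 2 ∨ j = i + 3 ∨ j = i + 4 := by decide
    rcases hj i j with rfl | rfl | rfl | rfl | rfl
    · exact h0
    · exact h1
    · exact h2
    · exact h3 ▸ C.pivot_mem_edge _
    · simpa [h3, show i + 3 + 1 = i + 4 by grind] using C.pivot_mem_edge_succ (i + 3)
  exact (C.eq_pivot_of_mem (h4 j) (h4 (j + 1))).symm

lemma pivot_const_or_injective : (∃ h, ∀ j, C.pivot j = h) ∨ Injective C.pivot := by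
  by_cases hcon : ∃ i, C.pivot i = C.pivot (i + 1)
  · obtain ⟨i, hi⟩ := hcon
    exact Or.inl ⟨C.pivot i, C.pivot_eq_of_pivot_eq_pivot_succ hi⟩
  right
  push Not at hcon
  have hadd_two : ∀ i, C.pivot i ≠ C.pivot (i + 2) := fun i h =>
    hcon i <| C.eq_pivot_of_mem (C.pivot_mem_edge_succ i)
      (by simpa [h, show i + 1 + 1 = i + 2 by grind] using C.pivot_mem_edge (i + 2))
  intro i j hij
  by_contra hne
  exact fin5_rel_of_ne (P := fun i j => C.pivot i ≠ C.pivot j) (fun _ _ => Ne.symm) hcon hadd_two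
    i j hne hij

lemma hasSubgraphIso_wheel (hC : ∀ i, G.IsClique (C.T i : Set V)) {h : V}
    (hh : ∀ j, C.pivot j = h) : HasSubgraphIso (wheel 5) G := by
  have hub : ∀ j, h ∈ C.edge j := fun j => hh j ▸ C.pivot_mem_edge j
  choose a ha hah using fun j => exists_mem_ne (C.card_edge j ▸ one_lt_two) h
  have hsucc : ∀ i, a i ≠ a (i + 1) := fun i he =>
    hah i ((C.eq_pivot_of_mem (ha i) (he ▸ ha (i + 1))).trans (hh i))
  -- otherwise `a i` and `h` both lie in the non-adjacent triangles `T (i + 1)` and `T (i + 3)`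
  have hadd_two : ∀ i, a i ≠ a (i + 2) := fun i he =>
    hah i <| C.eq_of_mem_T_of_mem_T_add_two (C.edge_subset_right i (ha i))
      (by simpa [he, show i + 1 + 2 = i + 2 + 1 by grind] using C.edge_subset_right _ (ha (i + 2)))
      (C.edge_subset_left _ (hub (i + 1)))
      (by simpa [show i + 1 + 2 = i + 3 by grind] using C.edge_subset_left _ (hub (i + 3)))
  have hinj : Injective a := fun i j hij => by
    by_contra hne
    exact fin5_rel_of_ne (P := fun i j => a i ≠ a j) (fun _ _ => Ne.symm) hsucc hadd_two i j hne hij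
  exact hasSubgraphIso_wheel_of_hub_rim h a hinj hah
    (fun j => hC j (C.edge_subset_left j (hub j)) (C.edge_subset_left j (ha j)) (hah j).symm)
    (fun j => hC (j + 1) (C.edge_subset_right j (ha j)) (C.edge_subset_left _ (ha (j + 1)))
      (hsucc j))

/-- The pivots `pivot i`, `pivot (i + 1)`, `pivot (i + 2)` all lie in the triangle `T (i + 2)`. -/
lemma hasSubgraphIso_completeGraph (hC : ∀ i, G.IsClique (C.T i : Set V))
    (hinj : Injective C.pivot) : HasSubgraphIso (completeGraph (Fin 5)) G := by
  refine ⟨⟨C.pivot, fun {i j} hij => ?_⟩, hinj⟩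
  refine fin5_rel_of_ne (P := fun i j => G.Adj (C.pivot i) (C.pivot j)) (fun _ _ => .symm)
    (fun i => hC (i + 1) (C.pivot_mem_T_succ i) (C.pivot_mem_T _) (hinj.ne ?_))
    (fun i => hC (i + 2) (C.pivot_mem_T_add_two i) (C.pivot_mem_T _) (hinj.ne ?_)) i j hij
  all_goals revert i; decide

def ofCycleEmbedding (φ : cycleGraph 5 ↪g triangleGraph G) : TripleCycle V where
  T i := φ i
  card_T i := (φ i).2.1
  card_inter_succ i := (triangleGraph_adj.mp (φ.map_rel_iff.mpr (by revert i; decide))).2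
  card_inter_add_two i :=
    card_inter_le_one_of_not_triangleGraph_adj
      (φ.injective.ne ((by decide : ∀ i : Fin 5, i ≠ i + 2) i))
      (φ.map_rel_iff.not.mpr ((by decide : ∀ i : Fin 5, ¬(cycleGraph 5).Adj i (i + 2)) i))

end TripleCycle

theorem triangleGraph_C5_iff_general {V : Type*} [DecidableEq V]
    (G : SimpleGraph V) :
    Nonempty (cycleGraph 5 ↪g triangleGraph G) ↔
      HasSubgraphIso (wheel 5) G ∨ HasSubgraphIso (completeGraph (Fin 5)) G := by
  constructor
  · rintro ⟨φ⟩
    obtain ⟨C, hC⟩ : ∃ C : TripleCycle V, ∀ i, G.IsClique (C.T i : Set V) :=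
      ⟨.ofCycleEmbedding φ, fun i => (φ i).2.isClique⟩
    rcases C.pivot_const_or_injective with ⟨h, hh⟩ | hinj
    · exact Or.inl (C.hasSubgraphIso_wheel hC hh)
    · exact Or.inr (C.hasSubgraphIso_completeGraph hC hinj)
  · rintro (⟨f, hf⟩ | ⟨f, hf⟩)
    · exact ⟨(f.triangleGraphEmbedding hf).comp wheelTriangleCycle⟩
    · exact ⟨(f.triangleGraphEmbedding hf).comp completeGraphTriangleCycle⟩

/-- `T(G)` contains an induced 5-cycle iff `G` contains a subgraph isomorphic to
the wheel `W₅` or to `K₅`. -/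
theorem triangleGraph_C5_iff {V : Type*} [Fintype V] [DecidableEq V]
    (G : SimpleGraph V) :
    Nonempty (cycleGraph 5 ↪g triangleGraph G) ↔
      HasSubgraphIso (wheel 5) G ∨ HasSubgraphIso (completeGraph (Fin 5)) G :=
  triangleGraph_C5_iff_general G
end
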